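/- For every positive integer s there exists a constant K > 0 such that the following holds: for every finite abelian group G and every real-valued positive definite function f : G → ℝ that is not identically zero, with |supp(f̂)| ≤ s and with supp(f̂) containing at least one character χ such that χ² ≠ 1, one has ν₁(f) − ν₂(f) ≤ K·ν₁(f)·|G|^{−4/s}. -/

import Mathlib

open Complex Finset

/-- The dual group `Ĝ = G →* ℂˣ` of a finite abelian group is finite. -/
noncomputable instance instFintypeDual (G : Type*) [CommGroup G] [Fintype G] :
    Fintype (G →* ℂˣ) := by
  have : NeZero (Monoid.exponent G) := ⟨Monoid.exponent_ne_zero_of_finite⟩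
  have : Finite (G →* ℂˣ) := by
    obtain ⟨e⟩ := CommGroup.monoidHom_mulEquiv_of_hasEnoughRootsOfUnity G ℂ
    exact Finite.of_equiv G e.symm.toEquiv
  exact Fintype.ofFinite _

/-- The Fourier transform of `f : G → ℂ`, as a function on the dual group `G →* ℂˣ`:
`f̂(χ) = (1/|G|) ∑_{x ∈ G} f(x) conj(χ(x))`. -/
noncomputable def fourierT {G : Type*} [CommGroup G] [Fintype G] (f : G → ℂ) :
    (G →* ℂˣ) → ℂ :=
  fun χ => (Fintype.card G : ℂ)⁻¹ * ∑ x : G, f x * (starRingEnd ℂ) ((χ x : ℂ))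

/-- Normalized inner product `⟨u,w⟩ = (1/|α|) ∑ u(χ) conj(w(χ))`. -/
noncomputable def inn {α : Type*} [Fintype α] (u w : α → ℂ) : ℂ :=
  (Fintype.card α : ℂ)⁻¹ * ∑ χ : α, u χ * (starRingEnd ℂ) (w χ)

/-- Normalized convolution `(u∗w)(χ) = (1/|α|) ∑_ρ u(χρ⁻¹) w(ρ)`. -/
noncomputable def convol {α : Type*} [Group α] [Fintype α] (u w : α → ℂ) : α → ℂ :=
  fun χ => (Fintype.card α : ℂ)⁻¹ * ∑ ρ : α, u (χ * ρ⁻¹) * w ρ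

/-- The Rayleigh quotient `R_f(v) = |G| ⟨f̂ ∗ v, v⟩ / ⟨v, v⟩`. -/
noncomputable def Rq {G : Type*} [CommGroup G] [Fintype G] (f : G → ℂ)
    (v : (G →* ℂˣ) → ℂ) : ℂ :=
  (Fintype.card G : ℂ) * inn (convol (fourierT f) v) v / inn v v

/-- `nu f k` is the `k`-th largest value (1-indexed, with multiplicity) of the
real-valued function `f` on a finite type. -/
noncomputable def nu {G : Type*} [Fintype G] (f : G → ℝ) (k : ℕ) : ℝ :=
  ((Finset.univ.val.map f).sort (· ≤ ·)).getD (Fintype.card G - k) 0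

/-- `f` is positive definite: every Fourier coefficient is a nonnegative real number. -/
def PosDef {G : Type*} [CommGroup G] [Fintype G] (f : G → ℂ) : Prop :=
  ∀ χ : G →* ℂˣ, (fourierT f χ).im = 0 ∧ 0 ≤ (fourierT f χ).re

/-!
By Fourier inversion, `f x = ∑_χ f̂(χ) Re χ(x)` with `f̂ ≥ 0`, so `f` is maximal at `1` and
`f 1 - f z ≤ f 1 · max_{χ ∈ supp f̂} (1 - Re χ(z))`. The support is closed under `χ ↦ χ⁻¹`,
which preserves `Re χ`; say it consists of `r` real characters and `d ≥ 1` pairs of non-real ones,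
so `r + 2d ≤ s`. Pigeonholing `|G|` elements into `2^r (N+1)^d` boxes (sign of each real
character, arc of length `2π/N` for one character of each pair) yields `z ≠ 1` killing the real
characters with `1 - Re χ(z) ≤ 2π²/N²` for the others. With `N ≈ |G|^{1/d} ≥ |G|^{2/s}` this is
`O(|G|^{-4/s})`, and then `ν₁ - ν₂ ≤ f 1 - f z`. Small groups are covered by `ν₁ - ν₂ ≤ 2ν₁`.
-/

open ComplexConjugate

section Characters

variable {G : Type*} [CommGroup G] [Fintype G]

lemma norm_char_apply (χ : G →* ℂˣ) (x : G) : ‖(χ x : ℂ)‖ = 1 :=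
  norm_eq_one_of_pow_eq_one (by rw [← Units.val_pow_eq_pow_val, ← map_pow, pow_card_eq_one,
    map_one, Units.val_one]) Fintype.card_ne_zero

lemma conj_char_apply (χ : G →* ℂˣ) (x : G) : conj (χ x : ℂ) = χ x⁻¹ := by
  rw [← RCLike.inv_eq_conj (norm_char_apply χ x), map_inv, Units.val_inv_eq_inv_val]

lemma re_char_inv_apply (χ : G →* ℂˣ) (x : G) : ((χ⁻¹ x : ℂˣ) : ℂ).re = (χ x : ℂ).re := by
  rw [MonoidHom.inv_apply, ← map_inv, ← conj_char_apply, conj_re]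

lemma card_dual : Fintype.card (G →* ℂˣ) = Fintype.card G := by
  have : NeZero (Monoid.exponent G) := ⟨Monoid.exponent_ne_zero_of_finite⟩
  simpa only [Nat.card_eq_fintype_card] using
    CommGroup.card_monoidHom_of_hasEnoughRootsOfUnity G ℂ

lemma sum_char_apply [DecidableEq G] (x : G) :
    ∑ χ : G →* ℂˣ, (χ x : ℂ) = if x = 1 then (Fintype.card G : ℂ) else 0 := by
  have : NeZero (Monoid.exponent G) := ⟨Monoid.exponent_ne_zero_of_finite⟩
  split_ifs with hx
  · simp [hx, card_dual]
  · obtain ⟨ψ, hψ⟩ := CommGroup.exists_apply_ne_one_of_hasEnoughRootsOfUnity G ℂ hx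
    refine eq_zero_of_mul_eq_self_left (b := (ψ x : ℂ)) (by simpa using hψ) ?_
    rw [Finset.mul_sum]
    exact Fintype.sum_bijective (ψ * ·) (Group.mulLeft_bijective ψ) _ _ fun χ => by simp

lemma sum_fourierT_mul_char_apply (f : G → ℂ) (x : G) :
    ∑ χ : G →* ℂˣ, fourierT f χ * χ x = f x := by
  classical
  have hG : (Fintype.card G : ℂ) ≠ 0 := Nat.cast_ne_zero.mpr Fintype.card_ne_zero
  calc ∑ χ : G →* ℂˣ, fourierT f χ * χ x
      = (Fintype.card G : ℂ)⁻¹ * ∑ y, f y * ∑ χ : G →* ℂˣ, (χ (x * y⁻¹) : ℂ) := by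
        simp only [fourierT, Finset.sum_mul, Finset.mul_sum, conj_char_apply, map_mul,
          Units.val_mul]
        rw [Finset.sum_comm]
        exact Finset.sum_congr rfl fun _ _ => Finset.sum_congr rfl fun _ _ => by ring
    _ = f x := by
        simp only [sum_char_apply, mul_inv_eq_one, mul_ite, mul_zero, Finset.sum_ite_eq,
          Finset.mem_univ, if_true]
        field_simp

end Characters

section RealFourier

variable {G : Type*} [CommGroup G] [Fintype G] {f : G → ℝ}

lemma fourierT_ofReal_inv (f : G → ℝ) (χ : G →* ℂˣ) :
    fourierT (fun x => (f x : ℂ)) χ⁻¹ = conj (fourierT (fun x => (f x : ℂ)) χ) := by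
  simp only [fourierT, map_mul, map_sum, map_inv₀, map_natCast, conj_ofReal, conj_char_apply,
    MonoidHom.inv_apply, map_inv]

lemma inv_mem_support_fourierT_ofReal {χ : G →* ℂˣ}
    (hχ : χ ∈ Function.support (fourierT (fun x => (f x : ℂ)))) :
    χ⁻¹ ∈ Function.support (fourierT (fun x => (f x : ℂ))) := by
  simpa [Function.mem_support, fourierT_ofReal_inv] using hχ

lemma PosDef.apply_eq_sum_re (hf : PosDef (fun x => (f x : ℂ))) (x : G) :
    f x = ∑ χ : G →* ℂˣ, (fourierT (fun x => (f x : ℂ)) χ).re * (χ x : ℂ).re := by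
  have := congrArg re (sum_fourierT_mul_char_apply (fun x => (f x : ℂ)) x)
  simpa [re_sum, mul_re, (hf _).1, eq_comm] using this

lemma PosDef.abs_apply_le_apply_one (hf : PosDef (fun x => (f x : ℂ))) (x : G) :
    |f x| ≤ f 1 := by
  rw [hf.apply_eq_sum_re x, hf.apply_eq_sum_re 1]
  refine (Finset.abs_sum_le_sum_abs _ _).trans (Finset.sum_le_sum fun χ _ => ?_)
  rw [abs_mul, abs_of_nonneg (hf χ).2, map_one, Units.val_one, one_re, mul_one]
  exact mul_le_of_le_one_right (hf χ).2 ((abs_re_le_norm _).trans (norm_char_apply χ x).le)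

lemma PosDef.apply_one_sub_apply_le (hf : PosDef (fun x => (f x : ℂ))) {z : G} {ε : ℝ}
    (hz : ∀ χ ∈ Function.support (fourierT (fun x => (f x : ℂ))), 1 - (χ z : ℂ).re ≤ ε) :
    f 1 - f z ≤ f 1 * ε := by
  rw [hf.apply_eq_sum_re z, hf.apply_eq_sum_re 1, ← Finset.sum_sub_distrib, Finset.sum_mul]
  refine Finset.sum_le_sum fun χ _ => ?_
  by_cases hχ : fourierT (fun x => (f x : ℂ)) χ = 0
  · simp [hχ]
  · rw [map_one, Units.val_one, one_re, mul_one, ← mul_one_sub]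
    exact mul_le_mul_of_nonneg_left (hz χ hχ) (hf χ).2

end RealFourier

section OrderStatistics

variable {G : Type*} [Fintype G] (f : G → ℝ)

lemma le_getD_of_le_countP (l : List ℝ) (hl : l.Pairwise (· ≤ ·)) {k : ℕ} {c : ℝ}
    (hk : 1 ≤ k) (hcount : k ≤ l.countP (fun x => c ≤ x)) :
    c ≤ l.getD (l.length - k) 0 := by
  have hkl : k ≤ l.length := hcount.trans List.countP_le_length
  set i := l.length - k
  have hi : i < l.length := by omega
  rw [List.getD_eq_getElem?_getD, List.getElem?_eq_getElem hi, Option.getD_some]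
  by_contra! hlt
  have htake : (l.take (i + 1)).countP (fun x => c ≤ x) = 0 := by
    refine List.countP_eq_zero.mpr fun a ha => ?_
    obtain ⟨j, hj, rfl⟩ := List.mem_take_iff_getElem.mp ha
    have := hl.rel_get_of_le (a := ⟨j, by omega⟩) (b := ⟨i, hi⟩) (by simp; omega)
    simp only [List.get_eq_getElem] at this
    simpa using this.trans_lt hlt
  have hsplit := List.countP_append (p := fun x => c ≤ x) (l₁ := l.take (i + 1))
    (l₂ := l.drop (i + 1))
  rw [List.take_append_drop, htake] at hsplit
  have := (List.drop (i + 1) l).countP_le_length (p := fun x => c ≤ x)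
  simp only [List.length_drop] at this
  omega

lemma length_sort_map_univ :
    ((Finset.univ.val.map f).sort (· ≤ ·)).length = Fintype.card G := by
  rw [Multiset.length_sort, Multiset.card_map]; rfl

lemma le_nu {k : ℕ} {c : ℝ} (hk : 1 ≤ k) (hcount : k ≤ #{x | c ≤ f x}) : c ≤ nu f k := by
  classical
  have hsort := Multiset.sort_eq (Finset.univ.val.map f) (· ≤ ·)
  rw [nu, ← length_sort_map_univ]
  refine le_getD_of_le_countP _ (Multiset.pairwise_sort _ _) hk ?_
  rwa [← Multiset.coe_countP, hsort, Multiset.countP_map]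

lemma exists_nu_eq_apply [Nonempty G] {k : ℕ} (hk : 1 ≤ k) : ∃ x, nu f k = f x := by
  have hi : Fintype.card G - k < ((Finset.univ.val.map f).sort (· ≤ ·)).length := by
    have := Fintype.card_pos (α := G)
    rw [length_sort_map_univ]; omega
  have hmem := List.getElem_mem hi
  rw [← Multiset.mem_coe, Multiset.sort_eq, Multiset.mem_map] at hmem
  obtain ⟨x, -, hx⟩ := hmem
  exact ⟨x, by rw [nu, List.getD_eq_getElem?_getD, List.getElem?_eq_getElem hi,
    Option.getD_some, hx]⟩

lemma nu_one_eq_of_forall_le {x₀ : G} (h : ∀ x, f x ≤ f x₀) : nu f 1 = f x₀ := by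
  have : Nonempty G := ⟨x₀⟩
  obtain ⟨x, hx⟩ := exists_nu_eq_apply f le_rfl
  refine le_antisymm (hx ▸ h x) (le_nu f le_rfl ?_)
  exact Finset.card_pos.mpr ⟨x₀, by simp⟩

lemma le_nu_two {x y : G} (hxy : x ≠ y) (h : f y ≤ f x) : f y ≤ nu f 2 := by
  classical
  refine le_nu f one_le_two ((Finset.card_pair hxy).symm.le.trans (Finset.card_le_card ?_))
  intro w hw
  rcases Finset.mem_insert.mp hw with rfl | hw
  · simpa using h
  · simp [Finset.mem_singleton.mp hw]

end OrderStatistics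

section Approximation

open Real

noncomputable def arcIndex (N : ℕ) (u : ℂ) : ℤ := ⌊(arg u + π) * N / (2 * π)⌋

lemma arcIndex_mem_Icc (N : ℕ) (u : ℂ) : arcIndex N u ∈ Finset.Icc 0 (N : ℤ) := by
  have h₁ := neg_pi_lt_arg u
  have h₂ := arg_le_pi u
  rw [Finset.mem_Icc, arcIndex, Int.floor_nonneg, ← Int.floor_natCast (R := ℝ) N]
  constructor
  · exact div_nonneg (mul_nonneg (by linarith) N.cast_nonneg) two_pi_pos.le
  · refine Int.floor_le_floor ?_
    rw [div_le_iff₀ (by positivity)]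
    nlinarith [Nat.cast_nonneg (α := ℝ) N]

lemma abs_arg_sub_arg_lt_of_arcIndex_eq {N : ℕ} (hN : 0 < N) {u v : ℂ}
    (h : arcIndex N u = arcIndex N v) : |arg u - arg v| < 2 * π / N := by
  have hN' : (0 : ℝ) < N := Nat.cast_pos.mpr hN
  have := Int.abs_sub_lt_one_of_floor_eq_floor h
  rw [← sub_div, ← sub_mul, add_sub_add_right_eq_sub, abs_div, abs_mul, abs_of_pos hN',
    abs_of_pos two_pi_pos, div_lt_one two_pi_pos] at this
  rwa [lt_div_iff₀ hN']

lemma one_sub_re_mul_conj_le {u v : ℂ} (hu : ‖u‖ = 1) (hv : ‖v‖ = 1) :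
    1 - (u * conj v).re ≤ (arg u - arg v) ^ 2 / 2 := by
  have hcos : (u * conj v).re = Real.cos (arg u - arg v) := by
    rw [mul_re, conj_re, conj_im, Real.cos_sub, ← norm_mul_cos_arg u, ← norm_mul_cos_arg v,
      ← norm_mul_sin_arg u, ← norm_mul_sin_arg v, hu, hv]
    ring
  linarith [one_sub_sq_div_two_le_cos (x := arg u - arg v)]

variable {G : Type*} [CommGroup G] [Fintype G]

/-- Pigeonhole over `2 ^ #R * (N + 1) ^ #D` boxes: the real characters in `R` take values
`±1`, and the values of those in `D` are located up to an arc of angle `2π / N`. -/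
lemma exists_ne_one_forall_char_near_one (R D : Finset (G →* ℂˣ)) (hR : ∀ χ ∈ R, χ ^ 2 = 1)
    {N : ℕ} (hN : 0 < N) (hcard : 2 ^ #R * (N + 1) ^ #D < Fintype.card G) :
    ∃ z ≠ 1, (∀ χ ∈ R, χ z = 1) ∧ ∀ χ ∈ D, 1 - (χ z : ℂ).re ≤ 2 * π ^ 2 / N ^ 2 := by
  classical
  let label : G → (R → ℂ) × (D → ℤ) := fun x => (fun χ => χ.1 x, fun χ => arcIndex N (χ.1 x))
  let B : Finset ((R → ℂ) × (D → ℤ)) := Fintype.piFinset (fun _ : R => ({1, -1} : Finset ℂ)) ×ˢ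
    Fintype.piFinset (fun _ : D => Finset.Icc 0 (N : ℤ))
  have hB : #B < #(Finset.univ : Finset G) := by
    refine lt_of_le_of_lt ?_ hcard
    simp only [B, Finset.card_product, Fintype.card_piFinset, Int.card_Icc, sub_zero,
      Finset.prod_const, Finset.card_univ, Fintype.card_coe]
    gcongr
    · exact Finset.card_le_two
    · omega
  have hlabel : ∀ x ∈ Finset.univ, label x ∈ B := by
    intro x _
    simp only [B, label, Finset.mem_product, Fintype.mem_piFinset, arcIndex_mem_Icc,
      implies_true, and_true]
    intro χ
    have : (χ.1 x : ℂ) ^ 2 = 1 := by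
      rw [← Units.val_pow_eq_pow_val, ← MonoidHom.pow_apply, hR χ χ.2, MonoidHom.one_apply,
        Units.val_one]
    simpa using this
  obtain ⟨x, -, y, -, hxy, hxy'⟩ := Finset.exists_ne_map_eq_of_card_lt_of_maps_to hB hlabel
  have hval : ∀ χ : G →* ℂˣ, (χ (x * y⁻¹) : ℂ) = χ x * conj (χ y : ℂ) := fun χ => by
    rw [conj_char_apply, map_mul, Units.val_mul]
  refine ⟨x * y⁻¹, mul_inv_eq_one.not.mpr hxy, fun χ hχ => ?_, fun χ hχ => ?_⟩
  · have hχxy : (χ x : ℂ) = χ y := congrFun (congrArg Prod.fst hxy') ⟨χ, hχ⟩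
    rw [map_mul, map_inv, Units.ext hχxy, mul_inv_cancel]
  · have harc := abs_arg_sub_arg_lt_of_arcIndex_eq hN (congrFun (congrArg Prod.snd hxy') ⟨χ, hχ⟩)
    calc 1 - (χ (x * y⁻¹) : ℂ).re
        ≤ (arg (χ x : ℂ) - arg (χ y : ℂ)) ^ 2 / 2 := by
          rw [hval]; exact one_sub_re_mul_conj_le (norm_char_apply χ x) (norm_char_apply χ y)
      _ ≤ (2 * π / N) ^ 2 / 2 :=
          div_le_div_of_nonneg_right (sq_le_sq' (abs_lt.mp harc).1.le (abs_lt.mp harc).2.le)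
            two_pos.le
      _ = 2 * π ^ 2 / N ^ 2 := by ring

end Approximation

open scoped Pointwise in
lemma Finset.exists_subset_forall_mem_or_inv_mem {α : Type*} [InvolutiveInv α] [LinearOrder α]
    (T : Finset α) (hT : ∀ x ∈ T, x⁻¹ ∈ T) (hfix : ∀ x ∈ T, x⁻¹ ≠ x) :
    ∃ D ⊆ T, 2 * #D ≤ #T ∧ ∀ x ∈ T, x ∈ D ∨ x⁻¹ ∈ D := by
  classical
  set D := T.filter fun x => x < x⁻¹
  refine ⟨D, Finset.filter_subset _ _, ?_, fun x hx => ?_⟩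
  · have hdisj : Disjoint D D⁻¹ := by
      refine Finset.disjoint_left.mpr fun x hx hx' => ?_
      rw [Finset.mem_inv', Finset.mem_filter, inv_inv] at hx'
      exact lt_asymm (Finset.mem_filter.mp hx).2 hx'.2
    have hsub : D ∪ D⁻¹ ⊆ T := Finset.union_subset (Finset.filter_subset _ _) fun x hx => by
      rw [Finset.mem_inv', Finset.mem_filter] at hx
      simpa using hT _ hx.1
    calc 2 * #D = #(D ∪ D⁻¹) := by rw [Finset.card_union_of_disjoint hdisj, Finset.card_inv]; ring
      _ ≤ #T := Finset.card_le_card hsub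
  · rcases (hfix x hx).lt_or_gt with h | h
    · exact Or.inr (Finset.mem_filter.mpr ⟨hT x hx, by rwa [inv_inv]⟩)
    · exact Or.inl (Finset.mem_filter.mpr ⟨hx, h⟩)

section Arithmetic

open Real

lemma rpow_four_div_le {s : ℕ} {x : ℝ} (hx₀ : 0 ≤ x) (hx : x ≤ 2 ^ (s + 1)) :
    x ^ ((4 : ℝ) / s) ≤ 2 ^ 8 := by
  have hexp : ((s + 1 : ℕ) : ℝ) * (4 / s) ≤ 8 := by
    rcases Nat.eq_zero_or_pos s with rfl | hs
    · norm_num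
    · have : (1 : ℝ) ≤ s := by exact_mod_cast hs
      rw [mul_div_assoc', div_le_iff₀ (by positivity)]
      push_cast
      linarith
  calc x ^ ((4 : ℝ) / s) ≤ ((2 : ℝ) ^ (s + 1)) ^ ((4 : ℝ) / s) := by gcongr
    _ = (2 : ℝ) ^ (((s + 1 : ℕ) : ℝ) * (4 / s)) := by rw [← rpow_natCast, ← rpow_mul zero_le_two]
    _ ≤ (2 : ℝ) ^ (8 : ℝ) := rpow_le_rpow_of_exponent_le one_le_two hexp
    _ = 2 ^ 8 := by norm_num

/-- The choice `N = ⌊(n / 2 ^ (s + 1)) ^ (1 / d)⌋` leaves fewer than `n` boxes while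
`N ^ 2 ≳ n ^ (2 / d) ≥ n ^ (4 / s)`. -/
lemma exists_nat_two_pow_mul_succ_pow_lt {s r d n : ℕ} (hd : 1 ≤ d) (hrd : r + 2 * d ≤ s)
    (hn : 2 ^ (s + 1) ≤ n) :
    ∃ N : ℕ, 0 < N ∧ 2 ^ r * (N + 1) ^ d < n ∧ (n : ℝ) ^ ((4 : ℝ) / s) ≤ 2 ^ 10 * N ^ 2 := by
  have hn' : (2 : ℝ) ^ (s + 1) ≤ n := by exact_mod_cast hn
  have hn₀ : (0 : ℝ) < n := lt_of_lt_of_le (by positivity) hn'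
  set β : ℝ := n / 2 ^ (s + 1) with hβ_def
  have hβ : 1 ≤ β := by rwa [le_div_iff₀ (by positivity), one_mul]
  set γ : ℝ := β ^ (d : ℝ)⁻¹ with hγ_def
  have hγd : γ ^ d = β := rpow_inv_natCast_pow (by linarith) (by omega)
  have hγ : 1 ≤ γ := one_le_rpow hβ (by positivity)
  set N := ⌊γ⌋₊
  have hN : 0 < N := Nat.floor_pos.mpr hγ
  have hN₁ : (1 : ℝ) ≤ N := by exact_mod_cast hN
  have hNγ : (N : ℝ) ≤ γ := Nat.floor_le (by linarith)
  have hγN : γ ≤ 2 * N := by linarith [Nat.lt_floor_add_one γ]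
  refine ⟨N, hN, ?_, ?_⟩
  · have : (2 ^ r * (N + 1) ^ d : ℝ) < n := calc
        (2 ^ r * (N + 1) ^ d : ℝ) ≤ 2 ^ r * (2 * γ) ^ d := by gcongr; linarith
        _ = 2 ^ (r + d) * β := by rw [mul_pow, hγd, pow_add]; ring
        _ ≤ 2 ^ s * β := by gcongr <;> [norm_num; omega]
        _ = n / 2 := by rw [hβ_def, pow_succ]; field_simp
        _ < n := by linarith
    exact_mod_cast this
  · have hexp : (4 : ℝ) / s ≤ 2 / d := by
      have : (2 * d : ℝ) ≤ s := by exact_mod_cast (by omega : 2 * d ≤ s)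
      rw [div_le_div_iff₀ (by linarith [(by exact_mod_cast hd : (1 : ℝ) ≤ d)])
        (by exact_mod_cast hd)]
      linarith
    calc (n : ℝ) ^ ((4 : ℝ) / s) = ((2 : ℝ) ^ (s + 1)) ^ ((4 : ℝ) / s) * β ^ ((4 : ℝ) / s) := by
          rw [← mul_rpow (by positivity) (by linarith), hβ_def, mul_div_cancel₀ _ (by positivity)]
      _ ≤ 2 ^ 8 * β ^ ((2 : ℝ) / d) := by
          gcongr
          exact rpow_four_div_le (by positivity) le_rfl
      _ = 2 ^ 8 * γ ^ 2 := by
          rw [hγ_def, ← rpow_natCast (β ^ _) 2, ← rpow_mul (by linarith)]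
          norm_num [div_eq_mul_inv, mul_comm]
      _ ≤ 2 ^ 8 * (2 * N) ^ 2 := by gcongr
      _ = 2 ^ 10 * N ^ 2 := by ring

end Arithmetic

section Main

open Real

variable {G : Type*} [CommGroup G] [Fintype G]

lemma exists_ne_one_forall_one_sub_re_le {s : ℕ} (S : Finset (G →* ℂˣ))
    (hS : ∀ χ ∈ S, χ⁻¹ ∈ S) (hSs : #S ≤ s) (hχ₀ : ∃ χ ∈ S, χ ^ 2 ≠ 1)
    (hn : 2 ^ (s + 1) ≤ Fintype.card G) :
    ∃ z ≠ 1, ∀ χ ∈ S, 1 - (χ z : ℂ).re ≤ 2 ^ 15 * (Fintype.card G : ℝ) ^ (-(4 : ℝ) / s) := by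
  classical
  -- `χ` and `χ⁻¹` have the same real part, so it suffices to pigeonhole one representative of
  -- each pair of non-real characters: this halves the dimension and yields the exponent `4 / s`.
  let _ : LinearOrder (G →* ℂˣ) := LinearOrder.lift' _ (Fintype.equivFin _).injective
  set R := S.filter (· ^ 2 = 1)
  set T := S.filter (· ^ 2 ≠ 1)
  obtain ⟨D, -, hD, hcover⟩ := T.exists_subset_forall_mem_or_inv_mem
    (fun χ hχ => by simp_all [T, inv_pow])
    (fun χ hχ h => (Finset.mem_filter.mp hχ).2 (by rw [sq]; exact inv_eq_iff_mul_eq_one.mp h))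
  have hd : 1 ≤ #D := by
    obtain ⟨χ, hχ, h2⟩ := hχ₀
    rcases hcover χ (Finset.mem_filter.mpr ⟨hχ, h2⟩) with h | h <;>
      exact Finset.card_pos.mpr ⟨_, h⟩
  have hrd : #R + 2 * #D ≤ s := by
    have : #R + #T = #S := Finset.card_filter_add_card_filter_not _
    omega
  obtain ⟨N, hN, hcount, hbound⟩ := exists_nat_two_pow_mul_succ_pow_lt hd hrd hn
  obtain ⟨z, hz, hzR, hzD⟩ := exists_ne_one_forall_char_near_one R D
    (fun χ hχ => (Finset.mem_filter.mp hχ).2) hN hcount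
  have hε : 2 * π ^ 2 / N ^ 2 ≤ 2 ^ 15 * (Fintype.card G : ℝ) ^ (-(4 : ℝ) / s) := by
    rw [neg_div, rpow_neg (Nat.cast_nonneg _), ← div_eq_mul_inv,
      div_le_div_iff₀ (by positivity) (by positivity)]
    calc 2 * π ^ 2 * (Fintype.card G : ℝ) ^ ((4 : ℝ) / s) ≤ 2 * 4 ^ 2 * (2 ^ 10 * (N : ℝ) ^ 2) := by
          gcongr
          exact pi_lt_four.le
      _ = 2 ^ 15 * (N : ℝ) ^ 2 := by ring
  refine ⟨z, hz, fun χ hχ => ?_⟩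
  by_cases h2 : χ ^ 2 = 1
  · rw [hzR χ (Finset.mem_filter.mpr ⟨hχ, h2⟩), Units.val_one, one_re, sub_self]
    positivity
  · rcases hcover χ (Finset.mem_filter.mpr ⟨hχ, h2⟩) with h | h
    · exact (hzD χ h).trans hε
    · exact re_char_inv_apply χ z ▸ (hzD _ h).trans hε

theorem PosDef.nu_one_sub_nu_two_le {s : ℕ} {f : G → ℝ} (hf : PosDef (fun x => (f x : ℂ)))
    (hsupp : (Function.support (fourierT (fun x => (f x : ℂ)))).ncard ≤ s)
    (hχ₀ : ∃ χ ∈ Function.support (fourierT (fun x => (f x : ℂ))), χ ^ 2 ≠ 1) :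
    nu f 1 - nu f 2 ≤ 2 ^ 15 * nu f 1 * (Fintype.card G : ℝ) ^ (-(4 : ℝ) / s) := by
  classical
  have hmax : ∀ x, f x ≤ f 1 := fun x => (le_abs_self _).trans (hf.abs_apply_le_apply_one x)
  have hf₁ : 0 ≤ f 1 := (abs_nonneg _).trans (hf.abs_apply_le_apply_one 1)
  rw [nu_one_eq_of_forall_le f hmax]
  rcases lt_or_ge (Fintype.card G) (2 ^ (s + 1)) with hsmall | hlarge
  · obtain ⟨w, hw⟩ := exists_nu_eq_apply f one_le_two
    have hw' : -f 1 ≤ nu f 2 := hw ▸ neg_le_of_abs_le (hf.abs_apply_le_apply_one w)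
    have hsmall' : (Fintype.card G : ℝ) ≤ 2 ^ (s + 1) := by exact_mod_cast hsmall.le
    have hG := rpow_four_div_le (Nat.cast_nonneg _) hsmall'
    have h2 : 2 ≤ 2 ^ 15 * (Fintype.card G : ℝ) ^ (-(4 : ℝ) / s) := by
      rw [neg_div, rpow_neg (Nat.cast_nonneg _), ← div_eq_mul_inv,
        le_div_iff₀ (by positivity)]
      linarith
    nlinarith
  · set S := Finset.univ.filter (· ∈ Function.support (fourierT (fun x => (f x : ℂ))))
    have hS : ∀ χ, χ ∈ S ↔ χ ∈ Function.support (fourierT (fun x => (f x : ℂ))) := by simp [S]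
    obtain ⟨z, hz, hzS⟩ := exists_ne_one_forall_one_sub_re_le S
      (fun χ hχ => (hS _).mpr (inv_mem_support_fourierT_ofReal ((hS χ).mp hχ)))
      (by rwa [← Set.ncard_coe_finset, Finset.coe_filter_univ]) (by simpa [hS] using hχ₀) hlarge
    have hgap := hf.apply_one_sub_apply_le fun χ hχ => hzS χ ((hS χ).mpr hχ)
    have hz₂ := le_nu_two f hz.symm (hmax z)
    linarith

end Main

theorem stmt_10_general (s : ℕ) :
    ∃ K : ℝ, 0 < K ∧
      ∀ (G : Type*) [CommGroup G] [Fintype G] (f : G → ℝ),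
        f ≠ 0 →
        PosDef (fun x => (f x : ℂ)) →
        (Function.support (fourierT (fun x => (f x : ℂ)))).ncard ≤ s →
        (∃ χ ∈ Function.support (fourierT (fun x => (f x : ℂ))), χ ^ 2 ≠ 1) →
        nu f 1 - nu f 2 ≤ K * nu f 1 * (Fintype.card G : ℝ) ^ (-(4 : ℝ) / s) :=
  ⟨2 ^ 15, by positivity, fun _ _ _ _ _ hf hsupp hχ₀ => hf.nu_one_sub_nu_two_le hsupp hχ₀⟩

/-- for each `s ≥ 1` there is `K > 0` such that for every finite abelian
group `G` and every nonzero real-valued positive definite `f : G → ℝ` with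
`|supp(f̂)| ≤ s` whose Fourier support contains a character `χ` with `χ² ≠ 1`:
`ν₁(f) − ν₂(f) ≤ K ν₁(f) |G|^{−4/s}`. -/
theorem stmt_10 (s : ℕ) (hs : 0 < s) :
    ∃ K : ℝ, 0 < K ∧
      ∀ (G : Type*) [CommGroup G] [Fintype G] (f : G → ℝ),
        f ≠ 0 →
        PosDef (fun x => (f x : ℂ)) →
        (Function.support (fourierT (fun x => (f x : ℂ)))).ncard ≤ s →
        (∃ χ ∈ Function.support (fourierT (fun x => (f x : ℂ))), χ ^ 2 ≠ 1) →
        nu f 1 - nu f 2 ≤ K * nu f 1 * (Fintype.card G : ℝ) ^ (-(4 : ℝ) / s) :=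
  stmt_10_general s
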